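/- For every Kripke structure S, state q, CCTLb formulas φ, ψ and CCTLb constraint C: q ⊨ E φ U_C ψ iff q ⊨ E ⊤ U_{C ∧ #(¬φ)=0} ψ, and q ⊨ A φ U_C ψ iff q ⊨ A ⊤ U_{C ∧ #(¬φ)=0} ψ. In particular, in CCTLb the Until modality is expressible from the F modality by strengthening the constraint. -/
import Mathlib


open scoped Classical

noncomputable section

/-- A Kripke structure over atomic propositions indexed by `ℕ`. -/
structure Kripke (Q : Type) where
  R : Q → Q → Prop
  total : ∀ q, ∃ q', R q q'
  label : Q → ℕ → Prop

/-- An (infinite) run of a Kripke structure. -/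
def Kripke.Run {Q : Type} (S : Kripke Q) (ρ : ℕ → Q) : Prop :=
  ∀ i, S.R (ρ i) (ρ (i + 1))

/-- The strict prefix `ρ(0) ⋯ ρ(n-1)` of a run (`n` states). -/
def runPrefix {Q : Type} (ρ : ℕ → Q) (n : ℕ) : List Q :=
  (List.range n).map ρ

/-- The number of states of a finite prefix satisfying a predicate. -/
def countSat {Q : Type} (p : Q → Prop) : List Q → ℕ
  | [] => 0
  | s :: t => (if p s then 1 else 0) + countSat p t

/-- Comparison operators `<, ≤, =, ≥, >`. -/
inductive Cmp where
  | lt | le | eq | ge | gt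

def Cmp.eval : Cmp → ℕ → ℕ → Prop
  | .lt, a, b => a < b
  | .le, a, b => a ≤ b
  | .eq, a, b => a = b
  | .ge, a, b => a ≥ b
  | .gt, a, b => a > b

mutual
/-- CCTLb formulas: `P | φ∧ψ | ¬φ | E φ U_C ψ | A φ U_C ψ`. -/
inductive CForm : Type where
  | atom : ℕ → CForm
  | and : CForm → CForm → CForm
  | not : CForm → CForm
  | eu : CForm → Constr → CForm → CForm
  | au : CForm → Constr → CForm → CForm

/-- Linear expressions `Σᵢ αᵢ·#φᵢ` with natural coefficients. -/
inductive LinExp : Type where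
  | term : ℕ → CForm → LinExp
  | add : LinExp → LinExp → LinExp

/-- Boolean combinations of atomic constraints `(Σᵢ αᵢ·#φᵢ) ∼ k`. -/
inductive Constr : Type where
  | atomic : LinExp → Cmp → ℕ → Constr
  | cand : Constr → Constr → Constr
  | cnot : Constr → Constr
end

mutual
/-- Satisfaction of a CCTLb formula at a state. -/
def sat {Q : Type} (S : Kripke Q) : CForm → Q → Prop
  | .atom p, q => S.label q p
  | .and φ ψ, q => sat S φ q ∧ sat S ψ q
  | .not φ, q => ¬ sat S φ q
  | .eu φ C ψ, q => ∃ ρ, S.Run ρ ∧ ρ 0 = q ∧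
      ∃ i, sat S ψ (ρ i) ∧ csat S C (runPrefix ρ i) ∧ ∀ j < i, sat S φ (ρ j)
  | .au φ C ψ, q => ∀ ρ, S.Run ρ → ρ 0 = q →
      ∃ i, sat S ψ (ρ i) ∧ csat S C (runPrefix ρ i) ∧ ∀ j < i, sat S φ (ρ j)
termination_by φ _ => sizeOf φ

/-- Value of a linear expression on a finite prefix. -/
def lval {Q : Type} (S : Kripke Q) : LinExp → List Q → ℕ
  | .term a φ, σ => a * countSat (fun s => sat S φ s) σ
  | .add e f, σ => lval S e σ + lval S f σ
termination_by e _ => sizeOf e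

/-- Satisfaction of a constraint by a finite prefix. -/
def csat {Q : Type} (S : Kripke Q) : Constr → List Q → Prop
  | .atomic e c k, σ => c.eval (lval S e σ) k
  | .cand C D, σ => csat S C σ ∧ csat S D σ
  | .cnot C, σ => ¬ csat S C σ
termination_by C _ => sizeOf C
end

/-- The formula `⊤` (derived). -/
def ctop : CForm := .not (.and (.atom 0) (.not (.atom 0)))

/-- The strengthened constraint `C ∧ #(¬φ) = 0`. -/
def strengthen (C : Constr) (φ : CForm) : Constr :=
  .cand C (.atomic (.term 1 (.not φ)) .eq 0)

/-- in CCTLb, Until is expressible from F by strengthening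
the constraint: `E φ U_C ψ ≡ E ⊤ U_{C ∧ #(¬φ)=0} ψ`, and similarly for
the `A`-quantified modality. -/
theorem until_from_F
    {Q : Type} [Fintype Q] (S : Kripke Q) (φ ψ : CForm) (C : Constr)
    (q : Q) :
    (sat S (.eu φ C ψ) q ↔ sat S (.eu ctop (strengthen C φ) ψ) q) ∧
    (sat S (.au φ C ψ) q ↔ sat S (.au ctop (strengthen C φ) ψ) q) := by
  have htop : ∀ s : Q, sat S ctop s := by
    intro s; simp [ctop, sat]
  have hcount : ∀ (p : Q → Prop) (l : List Q),
      countSat p l = 0 ↔ ∀ x ∈ l, ¬ p x := by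
    intro p l; induction l with
    | nil => simp [countSat]
    | cons a t ih =>
      simp only [countSat, List.mem_cons]
      by_cases h : p a <;> simp [h, ih]
  have key : ∀ (ρ : ℕ → Q) (i : ℕ),
      (csat S (strengthen C φ) (runPrefix ρ i) ∧ ∀ j < i, sat S ctop (ρ j)) ↔
      (csat S C (runPrefix ρ i) ∧ ∀ j < i, sat S φ (ρ j)) := by
    intro ρ i
    have hmem : ∀ x ∈ runPrefix ρ i, ∃ j < i, ρ j = x := by
      intro x hx
      simp only [runPrefix, List.mem_map, List.mem_range] at hx
      obtain ⟨j, hj, rfl⟩ := hx; exact ⟨j, hj, rfl⟩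
    simp only [strengthen, csat, lval, Cmp.eval, one_mul, sat, hcount]
    constructor
    · rintro ⟨⟨hC, h0⟩, -⟩
      refine ⟨hC, ?_⟩
      intro j hj
      have := h0 (ρ j) (by simp [runPrefix]; exact ⟨j, hj, rfl⟩)
      tauto
    · rintro ⟨hC, hφ⟩
      refine ⟨⟨hC, ?_⟩, fun j _ => htop _⟩
      intro x hx
      obtain ⟨j, hj, rfl⟩ := hmem x hx
      exact not_not.mpr (hφ j hj)
  constructor
  · simp only [sat]
    constructor
    · rintro ⟨ρ, hr, h0, i, hψ, hC, hφ⟩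
      exact ⟨ρ, hr, h0, i, hψ, ((key ρ i).mpr ⟨hC, hφ⟩).1,
        ((key ρ i).mpr ⟨hC, hφ⟩).2⟩
    · rintro ⟨ρ, hr, h0, i, hψ, hC, hφ⟩
      exact ⟨ρ, hr, h0, i, hψ, ((key ρ i).mp ⟨hC, hφ⟩).1,
        ((key ρ i).mp ⟨hC, hφ⟩).2⟩
  · simp only [sat]
    constructor
    · intro h ρ hr h0
      obtain ⟨i, hψ, hC, hφ⟩ := h ρ hr h0
      exact ⟨i, hψ, ((key ρ i).mpr ⟨hC, hφ⟩).1, ((key ρ i).mpr ⟨hC, hφ⟩).2⟩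
    · intro h ρ hr h0
      obtain ⟨i, hψ, hC, hφ⟩ := h ρ hr h0
      exact ⟨i, hψ, ((key ρ i).mp ⟨hC, hφ⟩).1, ((key ρ i).mp ⟨hC, hφ⟩).2⟩
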